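/- arXiv:1707.01888 — 2 statements merged into one kernel-verified Lean document; each statement's English description precedes it below -/
import Mathlib

section
/- For any state x in the informed set defined by start x_start, goal x_goal, and cost bound c (with Euclidean heuristic), x lies in the prolate hyperspheroid with foci x_start, x_goal, transverse diameter c; hence the Lebesgue measure of the informed set is at most c(c² − c_min²)^((n−1)/2) ζ_n / 2^n, where c_min = ‖x_goal − x_start‖. -/
/-!
Put `m = (a + b)/2`, `f = (b - a)/2`, `y = x - m`, `α = c/2` and `β² = α² - ‖f‖²`. With
`p = ‖y + f‖` and `q = ‖y - f‖` the two focal distances, expanding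
`(4α² - (p + q)²)(4α² - (p - q)²) ≥ 0` turns `p + q ≤ c` into the quadratic inequality
`α²‖y‖² - ⟪f, y⟫² ≤ α²β²`, which says that `y` is sent into the unit ball by the linear map
scaling the direction of `f` by `α⁻¹` and its orthogonal complement by `β⁻¹`. That map is a
rank-one perturbation of `β⁻¹ • id`, so its determinant is `α⁻¹β^(1-n)`, and the change of
variables formula for Haar measure gives the bound.
-/

open MeasureTheory Module
open scoped RealInnerProductSpace

theorem LinearMap.det_id_add_smulRight {R M : Type*} [CommRing R] [AddCommGroup M] [Module R M]
    [Module.Free R M] [Module.Finite R M] (φ : M →ₗ[R] R) (w : M) :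
    LinearMap.det (LinearMap.id + φ.smulRight w) = 1 + φ w := by
  let b := Module.Free.chooseBasis R M
  have hmat : LinearMap.toMatrix b b (LinearMap.id + φ.smulRight w) =
      1 + Matrix.replicateCol Unit (b.repr w) * Matrix.replicateRow Unit (φ ∘ b) := by
    ext i j
    simp [LinearMap.toMatrix_apply, Matrix.one_apply, Matrix.mul_apply, Finsupp.single_apply,
      eq_comm, mul_comm]
  rw [← LinearMap.det_toMatrix b, hmat, Matrix.det_one_add_replicateCol_mul_replicateRow]
  conv_rhs => rw [← b.sum_repr w, map_sum]
  simp [dotProduct, mul_comm]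

variable {E : Type*} [NormedAddCommGroup E] [InnerProductSpace ℝ E]

def prolateHyperspheroid (a b : E) (c : ℝ) : Set E := {x | ‖x - a‖ + ‖x - b‖ ≤ c}

theorem mul_sq_norm_sub_inner_sq_le_of_norm_add_add_norm_sub_le {y f : E} {α : ℝ}
    (h : ‖y + f‖ + ‖y - f‖ ≤ 2 * α) :
    α ^ 2 * ‖y‖ ^ 2 - ⟪f, y⟫ ^ 2 ≤ α ^ 2 * (α ^ 2 - ‖f‖ ^ 2) := by
  have hp := norm_nonneg (y + f)
  have hq := norm_nonneg (y - f)
  have hp2 : ‖y + f‖ ^ 2 = ‖y‖ ^ 2 + 2 * ⟪f, y⟫ + ‖f‖ ^ 2 := by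
    rw [norm_add_sq_real, real_inner_comm]
  have hq2 : ‖y - f‖ ^ 2 = ‖y‖ ^ 2 - 2 * ⟪f, y⟫ + ‖f‖ ^ 2 := by
    rw [norm_sub_sq_real, real_inner_comm]
  have hsum : 0 ≤ 4 * α ^ 2 - (‖y + f‖ + ‖y - f‖) ^ 2 := by nlinarith
  have hdiff : 0 ≤ 4 * α ^ 2 - (‖y + f‖ - ‖y - f‖) ^ 2 := by nlinarith
  nlinarith [mul_nonneg hsum hdiff]

/-- Scales the direction of `f` by `α⁻¹` and its orthogonal complement by `β⁻¹`. For `f = 0` the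
junk value `x / 0 = 0` makes it `β⁻¹ • id`, which is the right map since then `α = β`. -/
noncomputable def spheroidNormalization (f : E) (α β : ℝ) : E →ₗ[ℝ] E :=
  β⁻¹ • (LinearMap.id + (((β / α - 1) / ‖f‖ ^ 2) • innerₗ E f).smulRight f)

theorem spheroidNormalization_apply (f : E) (α β : ℝ) (y : E) :
    spheroidNormalization f α β y = β⁻¹ • (y + ((β / α - 1) / ‖f‖ ^ 2 * ⟪f, y⟫) • f) := by
  simp [spheroidNormalization]

theorem norm_spheroidNormalization_sq {f : E} {α β : ℝ} (hα : α ≠ 0)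
    (hαβ : α ^ 2 = β ^ 2 + ‖f‖ ^ 2) (y : E) :
    ‖spheroidNormalization f α β y‖ ^ 2 = (‖y‖ ^ 2 - ⟪f, y⟫ ^ 2 / α ^ 2) / β ^ 2 := by
  rcases eq_or_ne f 0 with rfl | hf
  · simp [spheroidNormalization_apply, norm_smul, mul_pow, div_eq_inv_mul]
  set κ := (β / α - 1) / ‖f‖ ^ 2
  have hκ : κ * (2 + κ * ‖f‖ ^ 2) = -1 / α ^ 2 := by
    have hf2 : ‖f‖ ^ 2 ≠ 0 := by positivity
    have hκf : κ * ‖f‖ ^ 2 = β / α - 1 := div_mul_cancel₀ _ hf2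
    rw [hκf]
    simp only [κ]
    field_simp
    linear_combination -hαβ
  simp only [spheroidNormalization_apply, norm_smul, mul_pow, norm_add_sq_real,
    real_inner_smul_right, Real.norm_eq_abs, sq_abs, real_inner_comm f y]
  linear_combination (β⁻¹ ^ 2 * ⟪f, y⟫ ^ 2) * hκ

theorem det_spheroidNormalization [FiniteDimensional ℝ E] {f : E} {α β : ℝ} (hα : 0 < α)
    (hβ : 0 < β) (hαβ : α ^ 2 = β ^ 2 + ‖f‖ ^ 2) :
    LinearMap.det (spheroidNormalization f α β) = β⁻¹ ^ finrank ℝ E * (β / α) := by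
  rw [spheroidNormalization, LinearMap.det_smul, LinearMap.det_id_add_smulRight]
  congr 1
  rcases eq_or_ne f 0 with rfl | hf
  · have : α = β := by rw [norm_zero, zero_pow two_ne_zero, add_zero] at hαβ; nlinarith
    simp [this, hβ.ne']
  · simp only [LinearMap.smul_apply, innerₗ_apply_apply, real_inner_self_eq_norm_sq, smul_eq_mul]
    field_simp
    ring

theorem prolateHyperspheroid_subset_preimage_closedBall {a b : E} {c β : ℝ} (hβ : 0 < β)
    (hcβ : (c / 2) ^ 2 = β ^ 2 + ‖(2 : ℝ)⁻¹ • (b - a)‖ ^ 2) :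
    prolateHyperspheroid a b c ⊆ (· + -((2 : ℝ)⁻¹ • (a + b))) ⁻¹'
      (spheroidNormalization ((2 : ℝ)⁻¹ • (b - a)) (c / 2) β ⁻¹' Metric.closedBall 0 1) := by
  intro x hx
  set f := (2 : ℝ)⁻¹ • (b - a)
  set y := x + -((2 : ℝ)⁻¹ • (a + b))
  have hfocal : ‖y + f‖ + ‖y - f‖ ≤ 2 * (c / 2) := by
    have hxa : y + f = x - a := by simp only [y, f]; module
    have hxb : y - f = x - b := by simp only [y, f]; module
    rw [hxa, hxb]
    linarith [show ‖x - a‖ + ‖x - b‖ ≤ c from hx]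
  have hα : c / 2 ≠ 0 := by
    intro h0
    rw [h0] at hcβ
    nlinarith [sq_nonneg ‖f‖]
  have hellipse := mul_sq_norm_sub_inner_sq_le_of_norm_add_add_norm_sub_le hfocal
  have hsq : ‖spheroidNormalization f (c / 2) β y‖ ^ 2 ≤ 1 := by
    rw [norm_spheroidNormalization_sq hα hcβ, div_le_one (by positivity), sub_le_iff_le_add,
      ← sub_le_iff_le_add', le_div_iff₀ (by positivity)]
    nlinarith
  rw [Set.mem_preimage, Set.mem_preimage, Metric.mem_closedBall, dist_zero_right]
  exact (pow_le_one_iff_of_nonneg (norm_nonneg _) two_ne_zero).mp hsq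

theorem addHaar_prolateHyperspheroid_le [FiniteDimensional ℝ E] [MeasurableSpace E]
    [BorelSpace E] (μ : Measure E) [μ.IsAddHaarMeasure] {a b : E} {c : ℝ} (h : ‖b - a‖ < c) :
    μ (prolateHyperspheroid a b c) ≤
      ENNReal.ofReal (c * (c ^ 2 - ‖b - a‖ ^ 2) ^ (((finrank ℝ E : ℝ) - 1) / 2) /
        2 ^ finrank ℝ E) * μ (Metric.closedBall 0 1) := by
  set D := c ^ 2 - ‖b - a‖ ^ 2 with hD_def
  set d := finrank ℝ E
  have hc : 0 < c := (norm_nonneg _).trans_lt h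
  have hD : 0 < D := by nlinarith [norm_nonneg (b - a)]
  set β := √D / 2 with hβ_def
  have hβ : 0 < β := by positivity
  have hcβ : (c / 2) ^ 2 = β ^ 2 + ‖(2 : ℝ)⁻¹ • (b - a)‖ ^ 2 := by
    rw [hβ_def, div_pow √D, Real.sq_sqrt hD.le, norm_smul, mul_pow, hD_def]
    norm_num
    ring
  have hdet := det_spheroidNormalization (by positivity) hβ hcβ
  have hvol : (β⁻¹ ^ d * (β / (c / 2)))⁻¹ = c * D ^ (((d : ℝ) - 1) / 2) / 2 ^ d := by
    have hsqrt : D ^ (((d : ℝ) - 1) / 2) = √D ^ d / √D := by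
      rw [← Real.rpow_natCast, ← Real.rpow_sub_one (by positivity), Real.sqrt_eq_rpow,
        ← Real.rpow_mul hD.le]
      ring_nf
    rw [hsqrt, hβ_def]
    field_simp
    rw [← mul_pow, div_mul_cancel₀ _ (by positivity)]
  calc μ (prolateHyperspheroid a b c)
      ≤ μ ((· + -((2 : ℝ)⁻¹ • (a + b))) ⁻¹'
          (spheroidNormalization ((2 : ℝ)⁻¹ • (b - a)) (c / 2) β ⁻¹' Metric.closedBall 0 1)) :=
        measure_mono (prolateHyperspheroid_subset_preimage_closedBall hβ hcβ)
    _ = _ := by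
      rw [measure_preimage_add_right,
        Measure.addHaar_preimage_linearMap μ (by rw [hdet]; positivity), hdet, hvol,
        abs_of_nonneg (by positivity)]

/-- Any state in the informed set lies in the prolate hyperspheroid with foci
`xstart`, `xgoal` and transverse diameter `c`; hence the measure of the informed set
is at most `c (c² − cmin²)^((n−1)/2) ζₙ / 2ⁿ` with `cmin = ‖xgoal − xstart‖`. -/
theorem informed_set_measure_bound (n : ℕ) (xstart xgoal : EuclideanSpace ℝ (Fin n))
    (c : ℝ) :
    (∀ x : EuclideanSpace ℝ (Fin n), ‖x - xstart‖ + ‖xgoal - x‖ < c →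
      x ∈ {y : EuclideanSpace ℝ (Fin n) | ‖y - xstart‖ + ‖y - xgoal‖ ≤ c}) ∧
    volume {x : EuclideanSpace ℝ (Fin n) | ‖x - xstart‖ + ‖xgoal - x‖ < c}
      ≤ ENNReal.ofReal
          (c * (c ^ 2 - ‖xgoal - xstart‖ ^ 2) ^ (((n : ℝ) - 1) / 2) / 2 ^ n) *
        volume (Metric.closedBall (0 : EuclideanSpace ℝ (Fin n)) 1) := by
  have hsub : {x : EuclideanSpace ℝ (Fin n) | ‖x - xstart‖ + ‖xgoal - x‖ < c} ⊆
      prolateHyperspheroid xstart xgoal c := fun x hx => by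
    show ‖x - xstart‖ + ‖x - xgoal‖ ≤ c
    rw [norm_sub_rev x xgoal]
    exact le_of_lt hx
  refine ⟨hsub, ?_⟩
  rcases le_or_gt c ‖xgoal - xstart‖ with hc | hc
  · have hempty : {x : EuclideanSpace ℝ (Fin n) | ‖x - xstart‖ + ‖xgoal - x‖ < c} = ∅ :=
      Set.eq_empty_of_forall_notMem fun x hx =>
        (hc.trans (norm_sub_le_norm_sub_add_norm_sub xgoal x xstart)).not_gt
          (by rw [add_comm]; exact hx)
    simp [hempty]
  · have hspheroid := addHaar_prolateHyperspheroid_le volume hc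
    rw [finrank_euclideanSpace_fin] at hspheroid
    exact (measure_mono hsub).trans hspheroid
end

section
/- Suppose edges into a vertex v are examined in non-decreasing order of estimated cost ĝT(u) + ĉ(u,v), with ĉ(u,v) ≤ c(u,v) for all u. If at some point the current running minimum M over true costs ĝT(u) + c(u,v) of edges examined so far satisfies M ≤ ĝT(u') + ĉ(u',v) for the next edge (u',v), then M equals the global minimum over all edges of ĝT(u) + c(u,v). -/
open scoped ENNReal

theorem iInf_subtype_lt_eq_iInf {ι α : Type*} [LinearOrder ι] [CompleteLattice α]
    (g : ι → α) (t : ι) (hge : ∀ i, t ≤ i → ⨅ j : {j // j < t}, g j ≤ g i) :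
    ⨅ j : {j // j < t}, g j = ⨅ i, g i := by
  refine le_antisymm (le_iInf fun i => ?_) (le_iInf fun j => iInf_le g j.1)
  rcases lt_or_ge i t with hlt | hge'
  · exact iInf_le (fun j : {j // j < t} => g j) ⟨i, hlt⟩
  · exact hge i hge'

theorem iInf_subtype_lt_eq_iInf_of_monotone_le {ι α : Type*} [LinearOrder ι] [CompleteLattice α]
    {g h : ι → α} (hle : h ≤ g) (hmono : Monotone h) {t : ι}
    (hstop : ⨅ j : {j // j < t}, g j ≤ h t) :
    ⨅ j : {j // j < t}, g j = ⨅ i, g i :=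
  iInf_subtype_lt_eq_iInf g t fun i hti => hstop.trans ((hmono hti).trans (hle i))

theorem running_min_early_termination_general {V : Type*} (q : ℕ) (u : Fin q → V)
    (gT : V → ℝ≥0∞) (chat ctrue : V → V → ℝ≥0∞) (v : V)
    (hadm : ∀ a, chat a v ≤ ctrue a v)
    (hsorted : Monotone fun i => gT (u i) + chat (u i) v)
    (t : Fin q)
    (hstop : (⨅ i : {i : Fin q // i < t}, gT (u i) + ctrue (u i) v)
      ≤ gT (u t) + chat (u t) v) :
    (⨅ i : {i : Fin q // i < t}, gT (u i) + ctrue (u i) v)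
      = ⨅ i : Fin q, gT (u i) + ctrue (u i) v :=
  iInf_subtype_lt_eq_iInf_of_monotone_le (fun i => add_le_add_right (hadm (u i)) _) hsorted hstop

/-- Early-termination correctness: if edges into `v` are examined in non-decreasing
order of estimated cost and the running minimum `M` of the true costs examined so far
satisfies `M ≤ ĝT(u') + ĉ(u',v)` for the next edge, then `M` is the global minimum of
the true costs over all edges into `v`. -/
theorem running_min_early_termination {V : Type*} (q : ℕ) (u : Fin q → V)
    (gT : V → ℝ≥0∞) (chat ctrue : V → V → ℝ≥0∞) (v : V)
    (hadm : ∀ a, chat a v ≤ ctrue a v)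
    (hsorted : Monotone fun i => gT (u i) + chat (u i) v)
    (t : Fin q) (ht : 0 < (t : ℕ))
    (hstop : (⨅ i : {i : Fin q // i < t}, gT (u i) + ctrue (u i) v)
      ≤ gT (u t) + chat (u t) v) :
    (⨅ i : {i : Fin q // i < t}, gT (u i) + ctrue (u i) v)
      = ⨅ i : Fin q, gT (u i) + ctrue (u i) v :=
  running_min_early_termination_general q u gT chat ctrue v hadm hsorted t hstop
end
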